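/- On ℝ⁶ with source coordinates (x, y, a, b, c, κ) and target coordinates (x, z₀, z₁, z₂, z₃, z₄), let φ(x, y, a, b, c, κ) = (x, y, c/a, a^(−3), −3·b·a^(−5), 3·(5·b² − a²·κ)·a^(−7)), let Z(p) = (1, c/a, b/a, κ, (1+b·c)/a², 0), and let e₆ = (0, 0, 0, 0, 0, 1). For q = (q₁, …, q₆) ∈ ℝ⁶ define the contact plane C(q) = span{(1, q₃, q₄, q₅, q₆, 0), e₆} ⊆ ℝ⁶. Then for every point p with a ≠ 0, the Fréchet derivative Dφ(p) maps the two-dimensional subspace span{Z(p), e₆} of ℝ⁶ onto the contact plane C(φ(p)); in particular Dφ(p)[e₆] = −3·a^(−5)·e₆ and the first five components of Dφ(p)[Z(p)] are (1, c/a, a^(−3), −3·b·a^(−5), 3·(5·b² − a²·κ)·a^(−7)). -/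

import Mathlib

/-!
`Dφ(p)` is computed explicitly. It scales `e₆` by `-3a⁻⁵ ≠ 0` and sends `Z(p)` to the
generator `(1, z₁, z₂, z₃, z₄, 0)` of the contact plane at `φ(p)` plus some multiple of `e₆`;
a shear of the pair `{Z(p), e₆}` then identifies the two spans.
-/

/-- The local equivalence `φ`, with source coordinates
`(x, y, a, b, c, κ) = (p 0, …, p 5)`. -/
noncomputable def phiMap (p : Fin 6 → ℝ) : Fin 6 → ℝ :=
  ![p 0, p 1, p 4 / p 2, (p 2) ^ (-(3 : ℤ)), -3 * p 3 * (p 2) ^ (-(5 : ℤ)),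
    3 * (5 * (p 3) ^ 2 - (p 2) ^ 2 * p 5) * (p 2) ^ (-(7 : ℤ))]

/-- The total differential operator `Z`. -/
noncomputable def Zvf (p : Fin 6 → ℝ) : Fin 6 → ℝ :=
  ![1, p 4 / p 2, p 3 / p 2, p 5, (1 + p 3 * p 4) / (p 2) ^ 2, 0]

/-- The sixth coordinate vector `e₆ = (0,0,0,0,0,1)`. -/
def e6 : Fin 6 → ℝ := ![0, 0, 0, 0, 0, 1]

/-- The fiber of the contact distribution of `J⁴(ℝ,ℝ)` at the point `q`. -/
def contactPlane (q : Fin 6 → ℝ) : Submodule ℝ (Fin 6 → ℝ) :=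
  Submodule.span ℝ {![1, q 2, q 3, q 4, q 5, 0], e6}

open ContinuousLinearMap

theorem hasFDerivAt_apply_zpow {ι : Type*} [Fintype ι] {p : ι → ℝ} {i : ι}
    (hp : p i ≠ 0) (n : ℤ) :
    HasFDerivAt (fun q : ι → ℝ => q i ^ n) ((n * p i ^ (n - 1)) • proj (R := ℝ) i) p :=
  (hasDerivAt_zpow n (p i) (.inl hp)).comp_hasFDerivAt (h₂ := (· ^ n)) p (hasFDerivAt_apply i p)

noncomputable def phiDeriv (p : Fin 6 → ℝ) : (Fin 6 → ℝ) →L[ℝ] (Fin 6 → ℝ) :=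
  pi ![proj 0, proj 1,
    (p 2)⁻¹ • proj 4 - (p 4 / p 2 ^ 2) • proj 2,
    (-3 * p 2 ^ (-4 : ℤ)) • proj 2,
    (15 * p 3 * p 2 ^ (-6 : ℤ)) • proj 2 - (3 * p 2 ^ (-5 : ℤ)) • proj 3,
    (15 * p 5 * p 2 ^ (-6 : ℤ) - 105 * p 3 ^ 2 * p 2 ^ (-8 : ℤ)) • proj 2
      + (30 * p 3 * p 2 ^ (-7 : ℤ)) • proj 3 - (3 * p 2 ^ (-5 : ℤ)) • proj 5]

theorem hasFDerivAt_phiMap {p : Fin 6 → ℝ} (hp : p 2 ≠ 0) :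
    HasFDerivAt phiMap (phiDeriv p) p := by
  have hx i := hasFDerivAt_apply (𝕜 := ℝ) i p
  have ha := hasFDerivAt_apply_zpow hp
  refine hasFDerivAt_pi'.2 fun i => ?_
  fin_cases i <;> [exact hx 0; exact hx 1;
    refine (((hx 4).mul (ha (-1))).congr_of_eventuallyEq
      (.of_forall fun q => by simp [phiMap, div_eq_mul_inv])).congr_fderiv ?_;
    refine (ha (-3)).congr_fderiv ?_;
    refine (((hx 3).const_mul (-3)).mul (ha (-5))).congr_fderiv ?_;
    refine (((((hx 3).pow 2).const_mul 5).sub (((hx 2).pow 2).mul (hx 5))).const_mul 3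
      |>.mul (ha (-7))).congr_fderiv ?_]
  all_goals
    ext v
    simp only [phiDeriv, proj_pi, Fin.reduceFinMk, Matrix.cons_val, add_apply, sub_apply,
      smul_apply, proj_apply, smul_eq_mul, Pi.mul_apply, Pi.sub_apply, zpow_neg, zpow_ofNat,
      Int.reduceNeg, Int.reduceSub, Int.cast_neg, Int.cast_ofNat] <;> field_simp <;> ring

theorem span_pair_add_smul_smul {K V : Type*} [Field K] [AddCommGroup V] [Module K V]
    (v e : V) (w : K) {c : K} (hc : c ≠ 0) :
    Submodule.span K {v + w • e, c • e} = Submodule.span K {v, e} := by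
  have shear : Submodule.span K {v + w • e, e} = Submodule.span K {v, e} := by
    apply le_antisymm <;>
      rw [Submodule.span_le, Set.insert_subset_iff, Set.singleton_subset_iff] <;>
      refine ⟨Submodule.mem_span_pair.2 ?_, Submodule.subset_span (by simp)⟩
    · exact ⟨1, w, by simp⟩
    · exact ⟨1, -w, by simp⟩
  rw [Submodule.span_insert, Submodule.span_singleton_smul_eq hc.isUnit, ← Submodule.span_insert,
    shear]

theorem e6_eq_single : e6 = Pi.single 5 1 := by
  ext i
  fin_cases i <;> rfl

theorem phiDeriv_e6 (p : Fin 6 → ℝ) : phiDeriv p e6 = (-3 * p 2 ^ (-5 : ℤ)) • e6 := by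
  ext i
  fin_cases i <;> simp [phiDeriv, e6]

def contactVector (q : Fin 6 → ℝ) : Fin 6 → ℝ := ![1, q 2, q 3, q 4, q 5, 0]

theorem phiDeriv_Zvf {p : Fin 6 → ℝ} (hp : p 2 ≠ 0) :
    phiDeriv p (Zvf p) = contactVector (phiMap p) + phiDeriv p (Zvf p) 5 • e6 := by
  ext i
  fin_cases i <;>
    simp only [phiDeriv, Zvf, contactVector, phiMap, e6, coe_pi', proj_apply, Fin.reduceFinMk,
      Matrix.cons_val, add_apply, sub_apply, smul_apply, smul_eq_mul, Pi.add_apply, Pi.smul_apply,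
      mul_zero, mul_one, sub_zero, add_zero, zero_add, zpow_neg, zpow_ofNat, Int.reduceNeg] <;>
    field_simp <;> ring

/-- `Dφ(p)` maps `span{Z(p), e₆}` onto the contact plane at `φ(p)`; in
particular `Dφ(p)[e₆] = -3 a⁻⁵ e₆`, and the first five components of
`Dφ(p)[Z(p)]` are `(1, c/a, a⁻³, -3 b a⁻⁵, 3(5b² - a²κ)a⁻⁷)`. -/
theorem phi_maps_cartan_distribution_to_contact (p : Fin 6 → ℝ) (hp : p 2 ≠ 0) :
    Submodule.map (fderiv ℝ phiMap p : (Fin 6 → ℝ) →ₗ[ℝ] (Fin 6 → ℝ)) (Submodule.span ℝ {Zvf p, e6}) =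
      contactPlane (phiMap p) ∧
    fderiv ℝ phiMap p e6 = (-3 * (p 2) ^ (-(5 : ℤ))) • e6 ∧
    fderiv ℝ phiMap p (Zvf p) 0 = 1 ∧
    fderiv ℝ phiMap p (Zvf p) 1 = p 4 / p 2 ∧
    fderiv ℝ phiMap p (Zvf p) 2 = (p 2) ^ (-(3 : ℤ)) ∧
    fderiv ℝ phiMap p (Zvf p) 3 = -3 * p 3 * (p 2) ^ (-(5 : ℤ)) ∧
    fderiv ℝ phiMap p (Zvf p) 4 =
      3 * (5 * (p 3) ^ 2 - (p 2) ^ 2 * p 5) * (p 2) ^ (-(7 : ℤ)) := by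
  rw [(hasFDerivAt_phiMap hp).fderiv]
  have hZ := phiDeriv_Zvf hp
  have hZi (i : Fin 6) (hi : i ≠ 5) : phiDeriv p (Zvf p) i = contactVector (phiMap p) i := by
    simpa [e6_eq_single, hi] using congrFun hZ i
  refine ⟨?_, phiDeriv_e6 p, hZi 0 (by decide), hZi 1 (by decide), hZi 2 (by decide),
    hZi 3 (by decide), hZi 4 (by decide)⟩
  rw [Submodule.map_span, Set.image_pair, ContinuousLinearMap.coe_coe, hZ, phiDeriv_e6,
    span_pair_add_smul_smul _ _ _ (by simpa using hp)]
  rfl
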